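/- arXiv:2503.02116 — 2 statements merged into one kernel-verified Lean document; each statement's English description precedes it below -/
import Mathlib

section
/- Let n ≥ 3 and π ∈ (0,1)^n with π_i ≠ 1/2 for all i. Define g_x(r) = (1/2)(∏_{i=1}^n x_i^{(1+r_i)/2} (1-x_i)^{(1-r_i)/2} + ∏_{i=1}^n x_i^{(1-r_i)/2} (1-x_i)^{(1+r_i)/2}) for x ∈ (0,1)^n and r ∈ {−1,+1}^n. Then the set S = {x ∈ (0,1)^n : g_x(r) = g_π(r) for all r ∈ {±1}^n} equals {π, 1−π} (where 1−π is the coordinatewise complement). -/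
open Real Finset

/-- Output distribution of `n` independent BSCs (crossover probs `x`) fed a uniform ±1 source. -/
noncomputable def g {n : ℕ} (x : Fin n → ℝ) (r : Fin n → ℝ) : ℝ :=
  (1/2) * ((∏ i, x i ^ ((1 + r i)/2) * (1 - x i) ^ ((1 - r i)/2))
    + ∏ i, x i ^ ((1 - r i)/2) * (1 - x i) ^ ((1 + r i)/2))

namespace Stmt0Aux

variable {n : ℕ}

/-- sign vector attached to a boolean vector -/
def sgn (s : Fin n → Bool) : Fin n → ℝ := fun k => if s k then 1 else -1

lemma sgn_pm (s : Fin n → Bool) : ∀ i, sgn s i = 1 ∨ sgn s i = -1 := by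
  intro i; unfold sgn; cases s i <;> simp

lemma g_eval (x : Fin n → ℝ) (s : Fin n → Bool) :
    g x (sgn s) = (1/2) * ((∏ i, if s i then x i else 1 - x i)
      + ∏ i, if s i then 1 - x i else x i) := by
  unfold g sgn
  congr 1
  congr 1
  · apply Finset.prod_congr rfl; intro i _
    cases hs : s i <;> norm_num [hs]
  · apply Finset.prod_congr rfl; intro i _
    cases hs : s i <;> norm_num [hs]

lemma core (f : Fin n → Bool → ℝ) :
    ∑ s : Fin n → Bool, ∏ k, f k (s k) = ∏ k, (f k true + f k false) := by
  classical
  have h := Finset.prod_univ_sum (fun _ : Fin n => (Finset.univ : Finset Bool)) f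
  simp only [Fintype.piFinset_univ] at h
  rw [← h]
  apply Finset.prod_congr rfl
  intro k _
  exact Fintype.sum_bool _

lemma filter_pair (i j : Fin n) :
    Finset.univ.filter (fun k => k = i ∨ k = j) = ({i, j} : Finset (Fin n)) := by
  ext k; simp

lemma signed (i j : Fin n) (hij : i ≠ j) (u : Fin n → Bool → ℝ)
    (hother : ∀ k, k ≠ i → k ≠ j → u k true + u k false = 1) :
    ∑ s : Fin n → Bool, (sgn s i * sgn s j) * ∏ k, u k (s k)
      = (u i true - u i false) * (u j true - u j false) := by
  classical
  have step : ∀ s : Fin n → Bool,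
      (sgn s i * sgn s j) * ∏ k, u k (s k)
        = ∏ k, ((if k = i ∨ k = j then (if s k then (1:ℝ) else -1) else 1) * u k (s k)) := by
    intro s
    rw [Finset.prod_mul_distrib]
    congr 1
    have h1 : (∏ k, if k = i ∨ k = j then (if s k then (1:ℝ) else -1) else 1)
        = ∏ k ∈ ({i, j} : Finset (Fin n)), (if s k then (1:ℝ) else -1) := by
      rw [← filter_pair i j, Finset.prod_filter]
    rw [h1, Finset.prod_pair hij]
    rfl
  have hc := core (fun k b => (if k = i ∨ k = j then (if b then (1:ℝ) else -1) else 1) * u k b)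
  simp only at hc
  calc ∑ s : Fin n → Bool, (sgn s i * sgn s j) * ∏ k, u k (s k)
      = ∑ s : Fin n → Bool, ∏ k,
          ((if k = i ∨ k = j then (if s k then (1:ℝ) else -1) else 1) * u k (s k)) :=
        Finset.sum_congr rfl fun s _ => step s
    _ = ∏ k, ((if k = i ∨ k = j then (if true then (1:ℝ) else -1) else 1) * u k true
          + (if k = i ∨ k = j then (if false then (1:ℝ) else -1) else 1) * u k false) := hc
    _ = ∏ k, (if k = i ∨ k = j then u k true - u k false else 1) := by
        apply Finset.prod_congr rfl
        intro k _
        by_cases hk : k = i ∨ k = j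
        · rw [if_pos hk, if_pos hk, if_pos hk]
          simp only [show (false = true) = False from by simp, show (true = true) = True from by simp,
            if_true, if_false]
          ring
        · rw [if_neg hk, if_neg hk, if_neg hk]
          push_neg at hk
          rw [one_mul, one_mul, hother k hk.1 hk.2]
    _ = ∏ k ∈ ({i, j} : Finset (Fin n)), (u k true - u k false) := by
        rw [← filter_pair i j, Finset.prod_filter]
    _ = (u i true - u i false) * (u j true - u j false) := Finset.prod_pair hij

lemma moment (x : Fin n → ℝ) (i j : Fin n) (hij : i ≠ j) :
    ∑ s : Fin n → Bool, (sgn s i * sgn s j) * g x (sgn s)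
      = (2 * x i - 1) * (2 * x j - 1) := by
  classical
  have hA : (∑ s : Fin n → Bool, (sgn s i * sgn s j) * ∏ k, if s k then x k else 1 - x k)
      = (x i - (1 - x i)) * (x j - (1 - x j)) :=
    signed i j hij (fun k b => if b then x k else 1 - x k) (fun k _ _ => by norm_num)
  have hB : (∑ s : Fin n → Bool, (sgn s i * sgn s j) * ∏ k, if s k then 1 - x k else x k)
      = ((1 - x i) - x i) * ((1 - x j) - x j) :=
    signed i j hij (fun k b => if b then 1 - x k else x k) (fun k _ _ => by norm_num)
  calc ∑ s : Fin n → Bool, (sgn s i * sgn s j) * g x (sgn s)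
      = ∑ s : Fin n → Bool,
          ((1/2) * ((sgn s i * sgn s j) * ∏ k, if s k then x k else 1 - x k)
            + (1/2) * ((sgn s i * sgn s j) * ∏ k, if s k then 1 - x k else x k)) := by
        apply Finset.sum_congr rfl
        intro s _
        rw [g_eval]
        ring
    _ = (1/2) * (∑ s : Fin n → Bool, (sgn s i * sgn s j) * ∏ k, if s k then x k else 1 - x k)
          + (1/2) * (∑ s : Fin n → Bool, (sgn s i * sgn s j) * ∏ k, if s k then 1 - x k else x k) := by
        rw [Finset.sum_add_distrib, ← Finset.mul_sum, ← Finset.mul_sum]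
    _ = (2 * x i - 1) * (2 * x j - 1) := by
        rw [hA, hB]; ring

end Stmt0Aux

theorem stmt0 (n : ℕ) (hn : 3 ≤ n) (p : Fin n → ℝ)
    (hp : ∀ i, p i ∈ Set.Ioo (0:ℝ) 1) (hp2 : ∀ i, p i ≠ 1/2) :
    {x : Fin n → ℝ | (∀ i, x i ∈ Set.Ioo (0:ℝ) 1) ∧
      ∀ r : Fin n → ℝ, (∀ i, r i = 1 ∨ r i = -1) → g x r = g p r}
      = {p, fun i => 1 - p i} := by
  ext x
  simp only [Set.mem_setOf_eq, Set.mem_insert_iff, Set.mem_singleton_iff]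
  constructor
  · rintro ⟨hx, hg⟩
    set a : Fin n → ℝ := fun i => 2 * x i - 1 with ha_def
    set b : Fin n → ℝ := fun i => 2 * p i - 1 with hb_def
    have hm : ∀ i j, i ≠ j → a i * a j = b i * b j := by
      intro i j hij
      show (2 * x i - 1) * (2 * x j - 1) = (2 * p i - 1) * (2 * p j - 1)
      rw [← Stmt0Aux.moment x i j hij, ← Stmt0Aux.moment p i j hij]
      exact Finset.sum_congr rfl fun s _ => by rw [hg _ (Stmt0Aux.sgn_pm s)]
    have hb : ∀ i, b i ≠ 0 := by
      intro i h
      apply hp2 i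
      have h' : 2 * p i - 1 = 0 := h
      linarith
    have h0 : (0:ℕ) < n := by omega
    have h1 : (1:ℕ) < n := by omega
    have h2 : (2:ℕ) < n := by omega
    set e0 : Fin n := ⟨0, h0⟩
    set e1 : Fin n := ⟨1, h1⟩
    set e2 : Fin n := ⟨2, h2⟩
    have ne01 : e0 ≠ e1 := by simp [e0, e1, Fin.ext_iff]
    have ne02 : e0 ≠ e2 := by simp [e0, e2, Fin.ext_iff]
    have ne12 : e1 ≠ e2 := by simp [e1, e2, Fin.ext_iff]
    have h01 := hm e0 e1 ne01
    have h02 := hm e0 e2 ne02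
    have h12 := hm e1 e2 ne12
    have ha12 : a e1 * a e2 ≠ 0 := by rw [h12]; exact mul_ne_zero (hb e1) (hb e2)
    have hsq : a e0 ^ 2 = b e0 ^ 2 := by
      have h' : a e0 ^ 2 * (a e1 * a e2) = b e0 ^ 2 * (a e1 * a e2) := by
        calc a e0 ^ 2 * (a e1 * a e2) = (a e0 * a e1) * (a e0 * a e2) := by ring
          _ = (b e0 * b e1) * (b e0 * b e2) := by rw [h01, h02]
          _ = b e0 ^ 2 * (b e1 * b e2) := by ring
          _ = b e0 ^ 2 * (a e1 * a e2) := by rw [h12]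
      exact mul_right_cancel₀ ha12 h'
    have hpm : a e0 = b e0 ∨ a e0 = -b e0 := by
      have hz : (a e0 - b e0) * (a e0 + b e0) = 0 := by linear_combination hsq
      rcases mul_eq_zero.mp hz with h | h
      · left; linarith
      · right; linarith
    rcases hpm with hcase | hcase
    · left
      funext i
      by_cases hi : i = e0
      · have hc : (2:ℝ) * x e0 - 1 = 2 * p e0 - 1 := hcase
        rw [hi]; linarith
      · have h := hm e0 i (fun h => hi h.symm)
        rw [hcase] at h
        have h' : a i = b i := mul_left_cancel₀ (hb e0) h
        have h'' : (2:ℝ) * x i - 1 = 2 * p i - 1 := h'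
        linarith
    · right
      funext i
      show x i = 1 - p i
      by_cases hi : i = e0
      · have hc : (2:ℝ) * x e0 - 1 = -(2 * p e0 - 1) := hcase
        rw [hi]; linarith
      · have h := hm e0 i (fun h => hi h.symm)
        rw [hcase] at h
        have hbe : (b e0 : ℝ) * (-a i) = b e0 * b i := by linarith [h]
        have h' : -a i = b i := mul_left_cancel₀ (hb e0) hbe
        have h'' : -((2:ℝ) * x i - 1) = 2 * p i - 1 := by
          have ha : a i = 2 * x i - 1 := rfl
          have hbv : b i = 2 * p i - 1 := rfl
          rw [← ha, ← hbv]; linarith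
        linarith
  · rintro (rfl | rfl)
    · exact ⟨hp, fun r _ => rfl⟩
    · constructor
      · intro i
        have h1 := (hp i).1
        have h2 := (hp i).2
        constructor
        · show (0:ℝ) < 1 - p i; linarith
        · show (1:ℝ) - p i < 1; linarith
      · intro r _
        show g (fun i => 1 - p i) r = g p r
        have hP1 : (∏ i, (1 - p i) ^ ((1 + r i)/2) * (1 - (1 - p i)) ^ ((1 - r i)/2))
            = ∏ i, p i ^ ((1 - r i)/2) * (1 - p i) ^ ((1 + r i)/2) := by
          apply Finset.prod_congr rfl
          intro i _
          rw [sub_sub_cancel, mul_comm]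
        have hP2 : (∏ i, (1 - p i) ^ ((1 - r i)/2) * (1 - (1 - p i)) ^ ((1 + r i)/2))
            = ∏ i, p i ^ ((1 + r i)/2) * (1 - p i) ^ ((1 - r i)/2) := by
          apply Finset.prod_congr rfl
          intro i _
          rw [sub_sub_cancel, mul_comm]
        unfold g
        simp only
        rw [hP1, hP2, add_comm]
end

section
/- For π ∈ (0,1)^n with n ≥ 3 and π_i ≠ 1/2 for all i: if x ∈ (0,1)^n satisfies (1/2 − x_i)(1/2 − x_j) = (1/2 − π_i)(1/2 − π_j) for all distinct i, j ∈ [n], then x = π or x = 1 − π (coordinatewise complement). -/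
theorem stmt1 (n : ℕ) (hn : 3 ≤ n) (p x : Fin n → ℝ)
    (hp : ∀ i, p i ∈ Set.Ioo (0:ℝ) 1) (hp2 : ∀ i, p i ≠ 1/2)
    (hx : ∀ i, x i ∈ Set.Ioo (0:ℝ) 1)
    (h : ∀ i j, i ≠ j → (1/2 - x i) * (1/2 - x j) = (1/2 - p i) * (1/2 - p j)) :
    x = p ∨ x = fun i => 1 - p i := by
  have hv : ∀ i, (1/2 - p i) ≠ 0 := fun i hi => hp2 i (by linarith [sub_eq_zero.mp hi])
  set a : Fin n := ⟨0, by omega⟩ with ha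
  set b : Fin n := ⟨1, by omega⟩ with hb
  set c : Fin n := ⟨2, by omega⟩ with hc
  have hab : a ≠ b := by simp [ha, hb, Fin.ext_iff]
  have hac : a ≠ c := by simp [ha, hc, Fin.ext_iff]
  have hbc : b ≠ c := by simp [hb, hc, Fin.ext_iff]
  -- u i ≠ 0
  have hu : ∀ i, (1/2 - x i) ≠ 0 := by
    intro i
    by_cases hia : i = a
    · have := h i b (by rw [hia]; exact hab)
      intro h0; rw [h0, zero_mul] at this
      exact mul_ne_zero (hv i) (hv b) this.symm
    · have := h i a hia
      intro h0; rw [h0, zero_mul] at this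
      exact mul_ne_zero (hv i) (hv a) this.symm
  -- squares equal
  have hsq : ∀ i, (1/2 - x i)^2 = (1/2 - p i)^2 := by
    intro i
    obtain ⟨j, k, hij, hik, hjk⟩ : ∃ j k, i ≠ j ∧ i ≠ k ∧ j ≠ k := by
      by_cases h1 : i = a
      · exact ⟨b, c, by rw [h1]; exact hab, by rw [h1]; exact hac, hbc⟩
      · by_cases h2 : i = b
        · exact ⟨a, c, by rw [h2]; exact fun e => hab e.symm, by rw [h2]; exact hbc, hac⟩
        · exact ⟨a, b, h1, h2, hab⟩
    have e1 := h i j hij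
    have e2 := h i k hik
    have e3 := h j k hjk
    have hne := mul_ne_zero (hu j) (hu k)
    have key : (1/2 - x i)^2 * ((1/2 - x j) * (1/2 - x k))
        = (1/2 - p i)^2 * ((1/2 - x j) * (1/2 - x k)) := by
      have expand : (1/2 - x i)^2 * ((1/2 - x j) * (1/2 - x k))
          = ((1/2 - x i) * (1/2 - x j)) * ((1/2 - x i) * (1/2 - x k)) := by ring
      rw [expand, e1, e2, e3]; ring
    exact mul_right_cancel₀ hne key
  have hpm : ∀ i, (1/2 - x i) = (1/2 - p i) ∨ (1/2 - x i) = -(1/2 - p i) := by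
    intro i
    have : ((1/2 - x i) - (1/2 - p i)) * ((1/2 - x i) + (1/2 - p i)) = 0 := by
      nlinarith [hsq i]
    rcases mul_eq_zero.mp this with h0 | h0
    · left; linarith
    · right; linarith
  rcases hpm a with hca | hca
  · left
    funext i
    by_cases hia : i = a
    · rw [hia]; linarith
    · have e := h a i (fun e => hia e.symm)
      rw [hca] at e
      have := mul_left_cancel₀ (hv a) e
      linarith
  · right
    funext i
    by_cases hia : i = a
    · rw [hia]; show x a = 1 - p a; linarith
    · have e := h a i (fun e => hia e.symm)
      rw [hca] at e
      have e' : (1/2 - p a) * (-(1/2 - x i)) = (1/2 - p a) * (1/2 - p i) := by linarith [e]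
      have := mul_left_cancel₀ (hv a) e'
      show x i = 1 - p i
      linarith
end
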